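/- Let L = sl₂(F) over a field F of characteristic zero with standard basis x, h, y satisfying [h,x] = 2x, [h,y] = −2y, [x,y] = h, and let α ∈ F. Then the linear operator R : L → L defined on the basis by R(x) = 0, R(h) = 2h + 8αx, R(y) = 4y − 4αh is a Rota–Baxter operator of weight −4. -/

import Mathlib

/-! The Rota–Baxter defect `(u, v) ↦ ⁅R u, R v⁆ - R (⁅R u, v⁆ + ⁅u, R v⁆ + w • ⁅u, v⁆)` is an
alternating bilinear map, so it vanishes as soon as it vanishes on the pairs `(x, h)`, `(x, y)`,
`(h, y)` of basis vectors; these three cases are a direct computation with the `sl₂` relations. -/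

section RotaBaxter

variable {F L : Type*} [CommRing F] [LieRing L] [LieAlgebra F L]

def rotaBaxterDefect (R : L →ₗ[F] L) (w : F) : L →ₗ[F] L →ₗ[F] L :=
  LinearMap.mk₂ F (fun u v => ⁅R u, R v⁆ - R (⁅R u, v⁆ + ⁅u, R v⁆ + w • ⁅u, v⁆))
    (fun _ _ _ => by simp only [map_add, add_lie, smul_add]; abel)
    (fun _ _ _ => by
      simp only [map_smul, smul_lie, smul_comm w]; simp only [← smul_add, map_smul, smul_sub])
    (fun _ _ _ => by simp only [map_add, lie_add, smul_add]; abel)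
    (fun _ _ _ => by
      simp only [map_smul, lie_smul, smul_comm w]; simp only [← smul_add, map_smul, smul_sub])

variable (R : L →ₗ[F] L) (w : F)

@[simp]
theorem rotaBaxterDefect_apply (u v : L) :
    rotaBaxterDefect R w u v = ⁅R u, R v⁆ - R (⁅R u, v⁆ + ⁅u, R v⁆ + w • ⁅u, v⁆) := rfl

theorem rotaBaxterDefect_self (u : L) : rotaBaxterDefect R w u u = 0 := by
  rw [rotaBaxterDefect_apply, ← lie_skew u (R u), lie_self, add_neg_cancel, lie_self, smul_zero,
    add_zero, map_zero, sub_zero]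

theorem rotaBaxterDefect_swap (u v : L) :
    rotaBaxterDefect R w v u = -rotaBaxterDefect R w u v := by
  rw [rotaBaxterDefect_apply, rotaBaxterDefect_apply, ← lie_skew (R u) (R v), ← lie_skew (R u) v,
    ← lie_skew u (R v), ← lie_skew u v, smul_neg, ← neg_add, ← neg_add, map_neg, add_comm ⁅v, R u⁆]
  abel

theorem rotaBaxterDefect_eq_zero_of_basis {ι : Type*} [LinearOrder ι] (b : Module.Basis ι F L)
    (hb : ∀ i j, i < j → rotaBaxterDefect R w (b i) (b j) = 0) : rotaBaxterDefect R w = 0 := by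
  refine LinearMap.ext_basis b b fun i j => ?_
  rcases lt_trichotomy i j with hij | rfl | hji
  · exact hb i j hij
  · exact rotaBaxterDefect_self R w (b i)
  · rw [rotaBaxterDefect_swap, hb j i hji, neg_zero, LinearMap.zero_apply, LinearMap.zero_apply]

theorem rotaBaxterDefect_eq_zero_of_basis_fin_three (b : Module.Basis (Fin 3) F L)
    (h01 : rotaBaxterDefect R w (b 0) (b 1) = 0) (h02 : rotaBaxterDefect R w (b 0) (b 2) = 0)
    (h12 : rotaBaxterDefect R w (b 1) (b 2) = 0) : rotaBaxterDefect R w = 0 :=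
  rotaBaxterDefect_eq_zero_of_basis R w b fun i j hij => by
    fin_cases i <;> fin_cases j <;> first | exact absurd hij (by decide) | assumption

theorem lie_eq_of_rotaBaxterDefect_eq_zero (h : rotaBaxterDefect R w = 0) (u v : L) :
    ⁅R u, R v⁆ = R (⁅R u, v⁆ + ⁅u, R v⁆ + w • ⁅u, v⁆) :=
  sub_eq_zero.mp (LinearMap.congr_fun₂ h u v)

end RotaBaxter

theorem stmt13 {F L : Type*} [Field F] [LieRing L] [LieAlgebra F L]
    -- `L = sl₂(F)` with standard basis `x, h, y`
    (bb : Module.Basis (Fin 3) F L) (x h y : L)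
    (hb0 : bb 0 = x) (hb1 : bb 1 = h) (hb2 : bb 2 = y)
    (hhx : ⁅h, x⁆ = (2 : F) • x) (hhy : ⁅h, y⁆ = (-2 : F) • y) (hxy : ⁅x, y⁆ = h)
    (α : F)
    -- the operator `R`
    (R : L →ₗ[F] L)
    (hRx : R x = 0) (hRh : R h = (2 : F) • h + (8 * α) • x)
    (hRy : R y = (4 : F) • y - (4 * α) • h) :
    -- `R` is a Rota–Baxter operator of weight `-4`
    ∀ u v : L, ⁅R u, R v⁆ = R (⁅R u, v⁆ + ⁅u, R v⁆ + (-4 : F) • ⁅u, v⁆) := by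
  have hxh : ⁅x, h⁆ = (-2 : F) • x := by rw [← lie_skew, hhx, ← neg_smul]
  refine lie_eq_of_rotaBaxterDefect_eq_zero R _
    (rotaBaxterDefect_eq_zero_of_basis_fin_three R _ bb ?_ ?_ ?_) <;>
    simp only [hb0, hb1, hb2, rotaBaxterDefect_apply, hRx, hRh, hRy, hhy, hxh, hxy, zero_lie,
      add_lie, smul_lie, lie_add, lie_sub, lie_smul, lie_self, map_add, map_sub, map_smul, map_zero,
      smul_zero, zero_add, add_zero, sub_self] <;>
    module
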